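/- Let P : C̃ → C together with ramification numbers e be a d-fold ramified covering of finite categories. Then for every n ≥ 1, #N_n(C̃) = d·#N_n(C) − V, where V = Σ_{x̃ ∈ Ob(C̃)} (e(x̃) − 1) = d·#Ob(C) − #Ob(C̃). -/

import Mathlib

open CategoryTheory

universe u

/-- The set of morphisms of `C` with target `x`, encoded as a sigma type. -/
abbrev Tgt (C : Type u) [SmallCategory C] (x : C) : Type u := Σ a : C, a ⟶ x

/-- The set of morphisms of `C` with source `x`, encoded as a sigma type. -/
abbrev Src (C : Type u) [SmallCategory C] (x : C) : Type u := Σ b : C, x ⟶ b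

/-- The map `T(x̃) → T(P x̃)` induced by a functor `P`. -/
def tgtMap {D C : Type u} [SmallCategory D] [SmallCategory C] (P : D ⥤ C) (x : D) :
    Tgt D x → Tgt C (P.obj x) := fun g => ⟨P.obj g.1, P.map g.2⟩

/-- The map `S(x̃) → S(P x̃)` induced by a functor `P`. -/
def srcMap {D C : Type u} [SmallCategory D] [SmallCategory C] (P : D ⥤ C) (x : D) :
    Src D x → Src C (P.obj x) := fun g => ⟨P.obj g.1, P.map g.2⟩

/-- `P : D ⥤ C` together with ramification numbers `e` is a ramified covering:
`C` is connected, `e x ≥ 1` for all `x`, `P : T(x̃) → T(P x̃)` is bijective,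
every morphism of `S̄(P x̃)` has exactly `e x̃` preimages in `S̄(x̃)`, and
`e x̃ = 1` whenever `S̄(P x̃)` is empty. -/
structure IsRamifiedCovering {D C : Type u} [SmallCategory D] [SmallCategory C]
    (P : D ⥤ C) (e : D → ℕ) : Prop where
  nonempty : Nonempty C
  zigzag : ∀ x y : C, Zigzag x y
  one_le : ∀ x : D, 1 ≤ e x
  tgt_bij : ∀ x : D, Function.Bijective (tgtMap P x)
  src_count : ∀ (x : D) (g : Src C (P.obj x)), g ≠ ⟨P.obj x, 𝟙 (P.obj x)⟩ →
    Nat.card {h : Src D x // h ≠ ⟨x, 𝟙 x⟩ ∧ srcMap P x h = g} = e x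
  ram_one : ∀ x : D, (∀ g : Src C (P.obj x), g = ⟨P.obj x, 𝟙 (P.obj x)⟩) → e x = 1


/-- A composable chain of `n` morphisms `x₀ → x₁ → ⋯ → xₙ` in `C`
(an element of `N_n(C)`). -/
structure Chain (C : Type u) [SmallCategory C] (n : ℕ) : Type u where
  obj : Fin (n + 1) → C
  map : ∀ i : Fin n, obj i.castSucc ⟶ obj i.succ

/-- A chain is non-degenerate if none of its morphisms is an identity
(an element of `N̄_n(C)`). -/
def Chain.NonDeg {C : Type u} [SmallCategory C] {n : ℕ} (c : Chain C n) : Prop :=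
  ∀ i : Fin n,
    (⟨c.obj i.succ, c.map i⟩ : Src C (c.obj i.castSucc)) ≠ ⟨c.obj i.castSucc, 𝟙 _⟩

/-- The image of a chain under a functor `P`. -/
def Chain.push {D C : Type u} [SmallCategory D] [SmallCategory C] (P : D ⥤ C) {n : ℕ}
    (c : Chain D n) : Chain C n :=
  ⟨fun i => P.obj (c.obj i), fun i => P.map (c.map i)⟩

/-- The constant identity chain `1_x` at an object `x`. -/
def Chain.const (C : Type u) [SmallCategory C] (x : C) (n : ℕ) : Chain C n :=
  ⟨fun _ => x, fun _ => 𝟙 x⟩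

/-- `P` is a `d`-fold ramified covering: for every object `x` of `C`, the multiset
`R(x)` of objects over `x`, each counted with multiplicity its ramification number,
has cardinality `d`, i.e. `Σ_{P xt = x} e(xt) = d`. -/
def IsDFold {D C : Type u} [SmallCategory D] [SmallCategory C]
    (P : D ⥤ C) (e : D → ℕ) (d : ℕ) : Prop :=
  ∀ x : C, Nat.card (Σ a : {a : D // P.obj a = x}, Fin (e a.1)) = d

/-!
A chain of `C` ending at `P x̃` lifts uniquely to a chain of `C̃` ending at `x̃`, because `P` is
bijective on morphisms with a given target; so `#N_n(C̃) = Σ_c #P⁻¹(c_n)`, summed over the chains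
`c` of `C`. Counting the lifts of a non-identity `g : x ⟶ y` once by target (one for each object
over `y`) and once by source (`e(x̃)` for each `x̃` over `x`) gives `#P⁻¹(y) = d`. If on the other
hand only the identity ends at `y`, the constant chain is the only chain ending at `y`. Hence
`d·#N_n(C) − #N_n(C̃) = Σ_y (d − #P⁻¹(y)) = d·#Ob(C) − #Ob(C̃)`, while `Σ e = d·#Ob(C)`.
-/

namespace Chain

section

variable {C : Type u} [SmallCategory C] {n : ℕ}

def last (c : Chain C n) : C := c.obj (Fin.last n)

instance [Finite C] [∀ a b : C, Finite (a ⟶ b)] : Finite (Chain C n) :=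
  Finite.of_equiv (Σ o : Fin (n + 1) → C, ∀ i : Fin n, o i.castSucc ⟶ o i.succ)
    { toFun := fun p => ⟨p.1, p.2⟩
      invFun := fun c => ⟨c.obj, c.map⟩
      left_inv := fun _ => rfl
      right_inv := fun _ => rfl }

theorem ext {c c' : Chain C n} (hobj : c.obj = c'.obj) (hmap : c.map ≍ c'.map) : c = c' := by
  cases c; cases c'; cases hobj; cases hmap; rfl

theorem eq_of_last_eq {c c' : Chain C 0} (h : c.last = c'.last) : c = c' :=
  ext (funext fun i => by rwa [Subsingleton.elim (α := Fin 1) i (Fin.last 0)])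
    (Function.hfunext rfl fun i => i.elim0)

def tail (c : Chain C (n + 1)) : Chain C n :=
  ⟨fun i => c.obj i.succ, fun i => c.map i.succ⟩

def cons (c : Chain C n) {x : C} (g : x ⟶ c.obj 0) : Chain C (n + 1) where
  obj := Fin.cases x c.obj
  map := Fin.cases g fun i => c.map i

def consEquiv (C : Type u) [SmallCategory C] (n : ℕ) :
    (Σ c : Chain C n, Tgt C (c.obj 0)) ≃ Chain C (n + 1) where
  toFun p := p.1.cons p.2.2
  invFun c := ⟨c.tail, c.obj 0, c.map 0⟩
  left_inv _ := rfl
  right_inv c := by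
    apply ext
    · funext i
      cases i using Fin.cases <;> rfl
    · refine Function.hfunext rfl fun i i' hi => ?_
      obtain rfl := eq_of_heq hi
      cases i using Fin.cases <;> rfl

theorem exists_eq_cons (c : Chain C (n + 1)) :
    ∃ (c' : Chain C n) (x : C) (g : x ⟶ c'.obj 0), c = c'.cons g := by
  obtain ⟨⟨c', x, g⟩, rfl⟩ := (consEquiv C n).surjective c
  exact ⟨c', x, g, rfl⟩

theorem cons_eq_cons_iff {c c' : Chain C n} {x x' : C} {g : x ⟶ c.obj 0} {g' : x' ⟶ c'.obj 0} :
    c.cons g = c'.cons g' ↔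
      (⟨c, x, g⟩ : Σ c : Chain C n, Tgt C (c.obj 0)) = ⟨c', x', g'⟩ :=
  (consEquiv C n).apply_eq_iff_eq (x := ⟨c, x, g⟩) (y := ⟨c', x', g'⟩)

theorem eq_const_of_last_eq {y : C} (hy : ∀ t : Tgt C y, t = ⟨y, 𝟙 y⟩) :
    ∀ {n : ℕ} (c : Chain C n), c.last = y → c = const C y n
  | 0, c, hc => eq_of_last_eq hc
  | n + 1, c, hc => by
    obtain ⟨c', x, g, rfl⟩ := c.exists_eq_cons
    obtain rfl := eq_const_of_last_eq hy c' hc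
    apply (consEquiv C n).symm.injective
    exact congrArg (Sigma.mk _) (hy ⟨x, g⟩)

theorem sum_apply_last [Fintype C] [Fintype (Chain C n)] {M : Type*} [AddCommMonoid M]
    (f : C → M) (hf : ∀ y, f y ≠ 0 → ∀ t : Tgt C y, t = ⟨y, 𝟙 y⟩) :
    ∑ c : Chain C n, f c.last = ∑ y, f y := by
  refine (Fintype.sum_of_injective (fun y => const C y n)
    (fun y y' hy => congrArg last hy) f _ (fun c hc => ?_) fun _ => rfl).symm
  by_contra hne
  exact hc ⟨c.last, (eq_const_of_last_eq (hf _ hne) c rfl).symm⟩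

end

section Lift

variable {D C : Type u} [SmallCategory D] [SmallCategory C] (P : D ⥤ C)

theorem push_cons {n : ℕ} (c : Chain D n) {x : D} (g : x ⟶ c.obj 0) :
    (c.cons g).push P = (c.push P).cons (P.map g) :=
  (consEquiv C n).symm.injective rfl

theorem eq_of_push_eq_of_last_eq (hP : ∀ x : D, Function.Injective (tgtMap P x)) :
    ∀ {n : ℕ} {c₁ c₂ : Chain D n}, c₁.push P = c₂.push P → c₁.last = c₂.last → c₁ = c₂
  | 0, _, _, _, hlast => eq_of_last_eq hlast
  | n + 1, c₁, c₂, hpush, hlast => by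
    obtain ⟨c₁, x₁, g₁, rfl⟩ := c₁.exists_eq_cons
    obtain ⟨c₂, x₂, g₂, rfl⟩ := c₂.exists_eq_cons
    rw [push_cons, push_cons] at hpush
    obtain ⟨hpush, hhead⟩ := Sigma.mk.inj_iff.1 (cons_eq_cons_iff.1 hpush)
    obtain rfl := eq_of_push_eq_of_last_eq hP hpush hlast
    exact cons_eq_cons_iff.2 (congrArg (Sigma.mk c₁) (hP _ (eq_of_heq hhead)))

theorem exists_push_eq (hP : ∀ x : D, Function.Surjective (tgtMap P x)) :
    ∀ {n : ℕ} (c : Chain C n) (a : D), P.obj a = c.last →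
      ∃ c' : Chain D n, c'.push P = c ∧ c'.last = a
  | 0, c, a, ha => ⟨const D a 0, eq_of_last_eq ha, rfl⟩
  | n + 1, c, a, ha => by
    obtain ⟨c, x, g, rfl⟩ := c.exists_eq_cons
    obtain ⟨c', rfl, hlast⟩ := exists_push_eq hP c a ha
    obtain ⟨⟨x', g'⟩, hg⟩ := hP (c'.obj 0) ⟨x, g⟩
    refine ⟨c'.cons g', ?_, hlast⟩
    exact (push_cons P c' g').trans (cons_eq_cons_iff.2 (congrArg (Sigma.mk _) hg))

theorem card_eq_sum_card_fiber_last (hP : ∀ x : D, Function.Bijective (tgtMap P x)) (n : ℕ)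
    [Fintype (Chain C n)] [Finite D] :
    Nat.card (Chain D n) = ∑ c : Chain C n, Nat.card {a : D // P.obj a = c.last} := by
  rw [← Nat.card_sigma]
  refine Nat.card_eq_of_bijective (fun c => ⟨c.push P, c.last, rfl⟩) ⟨fun c₁ c₂ h => ?_, ?_⟩
  · exact eq_of_push_eq_of_last_eq P (fun x => (hP x).1) (congrArg Sigma.fst h)
      (congrArg (fun p => p.2.1) h)
  · rintro ⟨c, a, ha⟩
    obtain ⟨c', rfl, rfl⟩ := exists_push_eq P (fun x => (hP x).2) c a ha
    exact ⟨c', rfl⟩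

end Lift

end Chain

theorem Nat.card_subtype_sigma {ι : Type*} [Fintype ι] {β : ι → Type*} [∀ i, Finite (β i)]
    (p : (Σ i, β i) → Prop) : Nat.card {m // p m} = ∑ i, Nat.card {b : β i // p ⟨i, b⟩} := by
  rw [← Nat.card_sigma]
  exact Nat.card_congr
    { toFun := fun m => ⟨m.1.1, m.1.2, m.2⟩
      invFun := fun s => ⟨⟨s.1, s.2.1⟩, s.2.2⟩
      left_inv := fun _ => rfl
      right_inv := fun _ => rfl }

section Fiber

variable {D C : Type u} [SmallCategory D] [SmallCategory C] {P : D ⥤ C} {e : D → ℕ} {d : ℕ}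

def srcSigmaEquivTgtSigma (C : Type u) [SmallCategory C] :
    (Σ x : C, Src C x) ≃ Σ y : C, Tgt C y where
  toFun m := ⟨m.2.1, m.1, m.2.2⟩
  invFun m := ⟨m.2.1, m.1, m.2.2⟩
  left_inv _ := rfl
  right_inv _ := rfl

theorem src_mk_eq_id_iff_tgt_mk_eq_id {x y : C} (g : x ⟶ y) :
    (⟨y, g⟩ : Src C x) = ⟨x, 𝟙 x⟩ ↔ (⟨x, g⟩ : Tgt C y) = ⟨y, 𝟙 y⟩ := by
  simp only [Sigma.mk.inj_iff]
  constructor <;> rintro ⟨rfl, hg⟩ <;> exact ⟨rfl, hg⟩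

theorem IsDFold.sum_filter_eq [Fintype D] [DecidableEq C] (hd : IsDFold P e d) (x : C) :
    ∑ a with P.obj a = x, e a = d := by
  rw [← hd x, Nat.card_sigma]
  simp only [Nat.card_eq_fintype_card, Fintype.card_fin]
  exact Finset.sum_subtype _ (fun a => by simp) e

theorem IsRamifiedCovering.card_src_lifts [DecidableEq C] (h : IsRamifiedCovering P e)
    {x y : C} (g : x ⟶ y)
    (hg : (⟨y, g⟩ : Src C x) ≠ ⟨x, 𝟙 x⟩) (a : D) :
    Nat.card {t : Src D a // (⟨P.obj a, srcMap P a t⟩ : Σ x, Src C x) = ⟨x, y, g⟩} =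
      if P.obj a = x then e a else 0 := by
  split_ifs with ha
  · subst ha
    rw [← h.src_count a ⟨y, g⟩ hg]
    refine Nat.card_congr (Equiv.subtypeEquivRight fun t => ?_)
    rw [sigma_mk_injective.eq_iff]
    refine (and_iff_right_of_imp fun ht ht_id => hg ?_).symm
    rw [← ht, ht_id]
    simp [srcMap]
  · exact Nat.card_eq_zero.2 (.inl ⟨fun t => ha (congrArg Sigma.fst t.2)⟩)

theorem IsRamifiedCovering.card_tgt_lifts [DecidableEq C] (h : IsRamifiedCovering P e)
    {x y : C} (g : x ⟶ y)
    (b : D) :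
    Nat.card {t : Tgt D b // (⟨P.obj b, tgtMap P b t⟩ : Σ y, Tgt C y) = ⟨y, x, g⟩} =
      if P.obj b = y then 1 else 0 := by
  split_ifs with hb
  · subst hb
    exact (Nat.card_congr ((Equiv.ofBijective _ (h.tgt_bij b)).subtypeEquiv
      (q := (· = ⟨x, g⟩)) fun t => sigma_mk_injective.eq_iff)).trans
      (Nat.card_unique (α := {s : Tgt C (P.obj b) // s = ⟨x, g⟩}))
  · exact Nat.card_eq_zero.2 (.inl ⟨fun t => hb (congrArg Sigma.fst t.2)⟩)

theorem IsRamifiedCovering.card_fiber_eq (h : IsRamifiedCovering P e) (hd : IsDFold P e d)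
    [Fintype D] [∀ a b : D, Finite (a ⟶ b)] {x y : C} (g : x ⟶ y)
    (hg : (⟨x, g⟩ : Tgt C y) ≠ ⟨y, 𝟙 y⟩) :
    Nat.card {b : D // P.obj b = y} = d := by
  classical
  calc Nat.card {b : D // P.obj b = y}
      = ∑ b, if P.obj b = y then 1 else 0 := by
        rw [Finset.sum_boole, Nat.card_eq_fintype_card, Fintype.card_subtype, Nat.cast_id]
    _ = Nat.card {m : Σ b, Tgt D b //
          (⟨P.obj m.1, tgtMap P m.1 m.2⟩ : Σ y, Tgt C y) = ⟨y, x, g⟩} := by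
        simp only [Nat.card_subtype_sigma, h.card_tgt_lifts g]
    _ = Nat.card {m : Σ a, Src D a //
          (⟨P.obj m.1, srcMap P m.1 m.2⟩ : Σ x, Src C x) = ⟨x, y, g⟩} :=
        Nat.card_congr <| (srcSigmaEquivTgtSigma D).symm.subtypeEquiv fun m =>
          ((srcSigmaEquivTgtSigma C).symm.apply_eq_iff_eq (x := ⟨P.obj m.1, tgtMap P m.1 m.2⟩)
            (y := ⟨y, x, g⟩)).symm
    _ = ∑ a, if P.obj a = x then e a else 0 := by
        simp only [Nat.card_subtype_sigma,
          h.card_src_lifts g ((src_mk_eq_id_iff_tgt_mk_eq_id g).not.2 hg)]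
    _ = d := by rw [← Finset.sum_filter, hd.sum_filter_eq]

end Fiber

section Count

variable {D C : Type u} [SmallCategory D] [SmallCategory C] [Fintype D] [Fintype C]
  {P : D ⥤ C} {e : D → ℕ} {d : ℕ}

theorem IsDFold.sum_sub_one (hd : IsDFold P e d) :
    ∑ a : D, ((e a : ℤ) - 1) = d * Fintype.card C - Fintype.card D := by
  classical
  have hsum : ∑ a, e a = d * Fintype.card C := by
    rw [← Finset.sum_fiberwise Finset.univ P.obj e]
    simp [hd.sum_filter_eq, mul_comm]
  rw [Finset.sum_sub_distrib, ← Nat.cast_sum, hsum]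
  simp

theorem IsRamifiedCovering.mul_card_chain_sub_card_chain [∀ a b : D, Finite (a ⟶ b)]
    (h : IsRamifiedCovering P e) (hd : IsDFold P e d) (n : ℕ) [Fintype (Chain C n)] :
    (d : ℤ) * Nat.card (Chain C n) - Nat.card (Chain D n) =
      d * Fintype.card C - Fintype.card D := by
  have hfiber : ∀ y, (d : ℤ) - Nat.card {a // P.obj a = y} ≠ 0 →
      ∀ t : Tgt C y, t = ⟨y, 𝟙 y⟩ := by
    rintro y hy ⟨x, g⟩
    by_contra hg
    exact hy (by rw [h.card_fiber_eq hd g hg, sub_self])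
  have hD : Nat.card D = ∑ y : C, Nat.card {a // P.obj a = y} := by
    rw [← Nat.card_sigma, Nat.card_congr (Equiv.sigmaFiberEquiv P.obj)]
  have hsum := Chain.sum_apply_last (n := n) _ hfiber
  rw [Finset.sum_sub_distrib, Finset.sum_sub_distrib] at hsum
  rw [Chain.card_eq_sum_card_fiber_last P h.tgt_bij n, Fintype.card_eq_nat_card (α := D), hD]
  simpa [mul_comm] using hsum

end Count

/-- For a `d`-fold ramified covering of finite categories and `n ≥ 1`,
`#N_n(C̃) = d·#N_n(C) − V`, where `V = Σ_{xt ∈ Ob(C̃)} (e(xt) − 1) = d·#Ob(C) − #Ob(C̃)`. -/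
theorem ramifiedCovering_card_chains {D C : Type u}
    [SmallCategory D] [SmallCategory C]
    [Fintype D] [Fintype C] [∀ a b : D, Finite (a ⟶ b)] [∀ a b : C, Finite (a ⟶ b)]
    (P : D ⥤ C) (e : D → ℕ) (d : ℕ)
    (h : IsRamifiedCovering P e) (hd : IsDFold P e d) (n : ℕ) (hn : 1 ≤ n) :
    ((Nat.card (Chain D n) : ℤ) = d * Nat.card (Chain C n) - ∑ a : D, ((e a : ℤ) - 1)) ∧
    ((∑ a : D, ((e a : ℤ) - 1)) = d * Fintype.card C - Fintype.card D) := by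
  have := Fintype.ofFinite (Chain C n)
  have hchains := h.mul_card_chain_sub_card_chain hd n
  have hV := hd.sum_sub_one
  exact ⟨by linarith, hV⟩
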